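/- arXiv:2404.01982 — 2 statements merged into one kernel-verified Lean document; each statement's English description precedes it below -/
import Mathlib

section
/- Weyl's majorant inequality: Let A be an n×n complex matrix with eigenvalues λ₁, …, λₙ (with multiplicity) and let p ≥ 1. Then Σᵢ |λᵢ|^p ≤ trace |A|^p. -/
open Matrix

/-- Singular values of a complex square matrix: the square roots of the
eigenvalues of `Aᴴ * A` (i.e. the eigenvalues of `|A| = (Aᴴ A)^(1/2)`). -/
noncomputable def singVal {n : ℕ} (A : Matrix (Fin n) (Fin n) ℂ) : Fin n → ℝ :=
  fun i => Real.sqrt ((Matrix.isHermitian_conjTranspose_mul_self A).eigenvalues i)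

/-- `trace |A|^p = ∑ sᵢ(A)^p`. -/
noncomputable def traceAbsPow {n : ℕ} (A : Matrix (Fin n) (Fin n) ℂ) (p : ℝ) : ℝ :=
  ∑ i, singVal A i ^ p

/-- The Schatten `p`-norm `‖A‖_p = (trace |A|^p)^(1/p)`. -/
noncomputable def schattenNorm {n : ℕ} (A : Matrix (Fin n) (Fin n) ℂ) (p : ℝ) : ℝ :=
  traceAbsPow A p ^ (1 / p)

/-! Schur's theorem gives an orthonormal basis `(x i)` in which `A` is upper triangular, so the
eigenvalues of `A` are the diagonal entries `⟪x i, A x i⟫`. If `(v j)` is an orthonormal eigenbasis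
of `Aᴴ A`, the vectors `A v j` are orthogonal with `‖A v j‖ = s j`. Expanding `x i` in the basis
`(v j)` and using AM-GM gives `|⟪x i, A x i⟫| ≤ ∑ j, c i j * s j` with
`c i j = (|⟪v j, x i⟫|² + |⟪A v j, x i⟫|² / s j²) / 2`. By Parseval and Bessel the matrix `c` is
doubly substochastic, and Jensen's inequality for the convex function `t ↦ t ^ p` finishes. -/

open Finset Module
open scoped InnerProductSpace

theorem ConvexOn.map_sum_le_of_sum_le_one {𝕜 E β ι : Type*} [Field 𝕜] [LinearOrder 𝕜]
    [IsStrictOrderedRing 𝕜] [AddCommGroup E] [AddCommGroup β] [PartialOrder β]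
    [IsOrderedAddMonoid β] [Module 𝕜 E] [Module 𝕜 β] [IsStrictOrderedModule 𝕜 β]
    {s : Set E} {f : E → β} {t : Finset ι} {w : ι → 𝕜} {p : ι → E}
    (hf : ConvexOn 𝕜 s f) (hs : 0 ∈ s) (hf0 : f 0 ≤ 0) (h₀ : ∀ i ∈ t, 0 ≤ w i)
    (h₁ : ∑ i ∈ t, w i ≤ 1) (hmem : ∀ i ∈ t, p i ∈ s) :
    f (∑ i ∈ t, w i • p i) ≤ ∑ i ∈ t, w i • f (p i) := by
  have h := hf.map_add_sum_le h₀ (sub_add_cancel 1 _) hmem (sub_nonneg.2 h₁) hs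
  rw [smul_zero, zero_add] at h
  exact h.trans (add_le_of_nonpos_left (smul_nonpos_of_nonneg_of_nonpos (sub_nonneg.2 h₁) hf0))

theorem Real.sum_rpow_sum_mul_le_sum_rpow {ι κ : Type*} [Fintype ι] [Fintype κ]
    {c : κ → ι → ℝ} {s : ι → ℝ} {p : ℝ} (hc : ∀ i j, 0 ≤ c i j)
    (hrow : ∀ i, ∑ j, c i j ≤ 1) (hcol : ∀ j, ∑ i, c i j ≤ 1) (hs : ∀ j, 0 ≤ s j)
    (hp : 1 ≤ p) :
    ∑ i, (∑ j, c i j * s j) ^ p ≤ ∑ j, s j ^ p := calc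
  ∑ i, (∑ j, c i j * s j) ^ p ≤ ∑ i, ∑ j, c i j * s j ^ p := by
    gcongr with i
    exact (convexOn_rpow hp).map_sum_le_of_sum_le_one Set.self_mem_Ici
      (by simp [Real.zero_rpow (by linarith : p ≠ 0)]) (fun j _ => hc i j) (hrow i)
      (fun j _ => hs j)
  _ = ∑ j, (∑ i, c i j) * s j ^ p := by rw [sum_comm]; simp only [sum_mul]
  _ ≤ ∑ j, s j ^ p := by
    gcongr with j
    exact mul_le_of_le_one_left (Real.rpow_nonneg (hs j) p) (hcol j)

theorem mul_le_add_sq_div_sq_mul {a b s : ℝ} (hs : 0 ≤ s) (hb : s = 0 → b = 0) :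
    a * b ≤ (a ^ 2 + b ^ 2 / s ^ 2) / 2 * s := by
  rcases hs.eq_or_lt with rfl | hs
  · simp [hb rfl]
  · have key : (a ^ 2 + b ^ 2 / s ^ 2) / 2 * s = ((a * s) ^ 2 + b ^ 2) / (2 * s) := by
      field_simp
    rw [key, le_div_iff₀ (by positivity)]
    nlinarith [sq_nonneg (a * s - b)]

theorem Matrix.IsUpperTriangular.roots_charpoly {ι R : Type*} [Fintype ι] [DecidableEq ι]
    [LinearOrder ι] [CommRing R] [IsDomain R] {M : Matrix ι ι R} (h : M.IsUpperTriangular) :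
    M.charpoly.roots = univ.val.map fun i => M i i := by
  rw [charpoly_of_isUpperTriangular M h,
    ← Polynomial.roots_multiset_prod_X_sub_C (univ.val.map fun i => M i i), Multiset.map_map]
  rfl

section InnerProductSpace

variable {𝕜 E ι κ : Type*} [RCLike 𝕜] [NormedAddCommGroup E] [InnerProductSpace 𝕜 E]
  [Fintype ι] [Fintype κ]

/-- Bessel's inequality for an orthogonal family (terms with `w j = 0` contribute `0 / 0 = 0`). -/
theorem sum_sq_norm_inner_div_sq_norm_le {w : ι → E}
    (hw : Pairwise fun j k => ⟪w j, w k⟫_𝕜 = 0) (y : E) :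
    ∑ j, ‖⟪w j, y⟫_𝕜‖ ^ 2 / ‖w j‖ ^ 2 ≤ ‖y‖ ^ 2 := by
  classical
  let u : {j // w j ≠ 0} → E := fun j => ((‖w j‖ : 𝕜)⁻¹) • w j
  have hu : Orthonormal 𝕜 u := by
    rw [orthonormal_iff_ite]
    rintro ⟨j, hj⟩ ⟨k, hk⟩
    by_cases hjk : j = k
    · subst hjk
      simp [u, inner_self_eq_norm_sq_to_K, hj]
    · simp [u, inner_smul_left, inner_smul_right, hw hjk, hjk]
  calc ∑ j, ‖⟪w j, y⟫_𝕜‖ ^ 2 / ‖w j‖ ^ 2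
      = ∑ j ∈ univ with w j ≠ 0, ‖⟪w j, y⟫_𝕜‖ ^ 2 / ‖w j‖ ^ 2 :=
        (sum_filter_of_ne fun j _ hj h0 => by simp [h0] at hj).symm
    _ = ∑ j : {j // w j ≠ 0}, ‖⟪u j, y⟫_𝕜‖ ^ 2 := by
        rw [← sum_subtype_eq_sum_filter]
        refine sum_congr (by ext; simp) fun j _ => ?_
        simp [u, inner_smul_left, div_eq_inv_mul, mul_pow]
    _ ≤ ‖y‖ ^ 2 := hu.sum_inner_products_le y

theorem OrthonormalBasis.inner_apply_self_eq_sum (T : E →ₗ[𝕜] E) (v : OrthonormalBasis ι 𝕜 E)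
    (x : E) : ⟪x, T x⟫_𝕜 = ∑ j, ⟪v j, x⟫_𝕜 * ⟪x, T (v j)⟫_𝕜 := by
  nth_rw 2 [← v.sum_repr' x]
  simp only [map_sum, map_smul, inner_sum, inner_smul_right]

theorem OrthonormalBasis.sum_norm_inner_apply_self_rpow_le (T : E →ₗ[𝕜] E)
    (v : OrthonormalBasis ι 𝕜 E) (x : OrthonormalBasis κ 𝕜 E)
    (hT : Pairwise fun j k => ⟪T (v j), T (v k)⟫_𝕜 = 0) {p : ℝ} (hp : 1 ≤ p) :
    ∑ i, ‖⟪x i, T (x i)⟫_𝕜‖ ^ p ≤ ∑ j, ‖T (v j)‖ ^ p := by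
  set c : κ → ι → ℝ := fun i j =>
    (‖⟪v j, x i⟫_𝕜‖ ^ 2 + ‖⟪T (v j), x i⟫_𝕜‖ ^ 2 / ‖T (v j)‖ ^ 2) / 2 with hc
  have bound : ∀ i, ‖⟪x i, T (x i)⟫_𝕜‖ ≤ ∑ j, c i j * ‖T (v j)‖ := fun i => calc
    ‖⟪x i, T (x i)⟫_𝕜‖ ≤ ∑ j, ‖⟪v j, x i⟫_𝕜‖ * ‖⟪T (v j), x i⟫_𝕜‖ := by
      rw [v.inner_apply_self_eq_sum T]
      refine (norm_sum_le _ _).trans_eq (sum_congr rfl fun j _ => ?_)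
      rw [norm_mul, norm_inner_symm (x i)]
    _ ≤ ∑ j, c i j * ‖T (v j)‖ := by
      refine sum_le_sum fun j _ => mul_le_add_sq_div_sq_mul (norm_nonneg _) fun h => ?_
      rw [norm_eq_zero.1 h, inner_zero_left, norm_zero]
  have hrow : ∀ i, ∑ j, c i j ≤ 1 := fun i => by
    have := sum_sq_norm_inner_div_sq_norm_le hT (x i)
    simp only [hc, ← sum_div, sum_add_distrib, v.sum_sq_norm_inner_right,
      x.orthonormal.1 i] at this ⊢
    linarith
  have hcol : ∀ j, ∑ i, c i j ≤ 1 := fun j => by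
    have : ‖T (v j)‖ ^ 2 / ‖T (v j)‖ ^ 2 ≤ 1 := div_self_le_one _
    simp only [hc, ← sum_div, sum_add_distrib, x.sum_sq_norm_inner_left,
      v.orthonormal.1 j] at this ⊢
    linarith
  calc ∑ i, ‖⟪x i, T (x i)⟫_𝕜‖ ^ p ≤ ∑ i, (∑ j, c i j * ‖T (v j)‖) ^ p :=
        sum_le_sum fun i _ => Real.rpow_le_rpow (norm_nonneg _) (bound i) (by linarith)
    _ ≤ ∑ j, ‖T (v j)‖ ^ p :=
        Real.sum_rpow_sum_mul_le_sum_rpow (fun i j => by positivity) hrow hcol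
          (fun j => norm_nonneg _) hp

theorem OrthonormalBasis.exists_coe_eq_snoc [FiniteDimensional 𝕜 E] {n : ℕ}
    (hn : finrank 𝕜 E = n + 1) {K : Submodule 𝕜 E} (f : OrthonormalBasis (Fin n) 𝕜 K) {u : E}
    (hu : ‖u‖ = 1) (huK : u ∈ Kᗮ) :
    ∃ x : OrthonormalBasis (Fin (n + 1)) 𝕜 E, ⇑x = Fin.snoc (fun i => (f i : E)) u := by
  have hon : Orthonormal 𝕜 (Fin.snoc (fun i => (f i : E)) u : Fin (n + 1) → E) := by
    rw [orthonormal_iff_ite]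
    intro i j
    induction i using Fin.lastCases <;> induction j using Fin.lastCases
    · simp [inner_self_eq_norm_sq_to_K, hu]
    · simp [Submodule.inner_left_of_mem_orthogonal (f _).2 huK, (Fin.castSucc_lt_last _).ne']
    · simp [Submodule.inner_right_of_mem_orthogonal (f _).2 huK, (Fin.castSucc_lt_last _).ne]
    · simp [← Submodule.coe_inner, orthonormal_iff_ite.1 f.orthonormal]
  refine ⟨OrthonormalBasis.mk hon ?_, OrthonormalBasis.coe_mk _ _⟩
  exact (hon.linearIndependent.span_eq_top_of_card_eq_finrank' (by simp [hn])).ge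

theorem LinearMap.roots_charpoly_of_inner_apply_eq_zero_of_lt [DecidableEq ι] [LinearOrder ι]
    [FiniteDimensional 𝕜 E] (T : E →ₗ[𝕜] E) (x : OrthonormalBasis ι 𝕜 E)
    (hx : ∀ i j, j < i → ⟪x i, T (x j)⟫_𝕜 = 0) :
    T.charpoly.roots = univ.val.map fun i => ⟪x i, T (x i)⟫_𝕜 := by
  have entry : ∀ i j, toMatrix x.toBasis x.toBasis T i j = ⟪x i, T (x j)⟫_𝕜 := fun i j => by
    rw [LinearMap.toMatrix_apply, OrthonormalBasis.coe_toBasis_repr_apply, x.repr_apply_apply,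
      OrthonormalBasis.coe_toBasis]
  rw [← T.charpoly_toMatrix x.toBasis,
    IsUpperTriangular.roots_charpoly fun i j h => (entry i j).trans (hx i j h)]
  simp only [entry]

theorem Matrix.charpoly_toEuclideanLin [DecidableEq ι] (A : Matrix ι ι 𝕜) :
    (toEuclideanLin A).charpoly = A.charpoly := by
  rw [toEuclideanLin_eq_toLin_orthonormal, charpoly_toLin]

theorem Matrix.inner_toEuclideanLin_eigenvectorBasis {m : Type*} [Fintype m] [DecidableEq m]
    [DecidableEq ι] (A : Matrix m ι 𝕜) (j k : ι) :
    ⟪toEuclideanLin A ((isHermitian_conjTranspose_mul_self A).eigenvectorBasis j),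
      toEuclideanLin A ((isHermitian_conjTranspose_mul_self A).eigenvectorBasis k)⟫_𝕜 =
      if j = k then ((isHermitian_conjTranspose_mul_self A).eigenvalues j : 𝕜) else 0 := by
  set hH := isHermitian_conjTranspose_mul_self A
  rw [← LinearMap.adjoint_inner_right, ← toEuclideanLin_conjTranspose_eq_adjoint,
    ← LinearMap.comp_apply, ← toLpLin_mul_same, toLpLin_apply, hH.mulVec_eigenvectorBasis,
    WithLp.toLp_smul, WithLp.toLp_ofLp, RCLike.real_smul_eq_coe_smul (K := 𝕜),
    inner_smul_right, orthonormal_iff_ite.1 hH.eigenvectorBasis.orthonormal]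
  split_ifs with h <;> simp [h]

end InnerProductSpace

/-- Schur triangularization: the orthogonal complement of an eigenvector of `T†` is `T`-invariant,
so the induction continues there and the unit eigenvector is appended last. -/
theorem LinearMap.exists_orthonormalBasis_inner_apply_eq_zero_of_lt {E : Type*}
    [NormedAddCommGroup E] [InnerProductSpace ℂ E] [FiniteDimensional ℂ E] {n : ℕ}
    (hn : finrank ℂ E = n) (T : E →ₗ[ℂ] E) :
    ∃ x : OrthonormalBasis (Fin n) ℂ E, ∀ i j, j < i → ⟪x i, T (x j)⟫_ℂ = 0 := by
  induction n generalizing E with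
  | zero => exact ⟨(stdOrthonormalBasis ℂ E).reindex (finCongr hn), fun i => i.elim0⟩
  | succ n ih =>
    have : Nontrivial E := Module.nontrivial_of_finrank_eq_succ hn
    obtain ⟨μ, hμ⟩ := Module.End.exists_eigenvalue (LinearMap.adjoint T)
    obtain ⟨w, hw⟩ := hμ.exists_hasEigenvector
    set K := (ℂ ∙ w)ᗮ
    have hK : ∀ y ∈ K, T y ∈ K := fun y hy => by
      rw [Submodule.mem_orthogonal_singleton_iff_inner_right] at hy ⊢
      rw [← LinearMap.adjoint_inner_left, hw.apply_eq_smul, inner_smul_left, hy, mul_zero]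
    have : Fact (finrank ℂ E = n + 1) := ⟨hn⟩
    obtain ⟨f, hf⟩ := ih (Submodule.finrank_orthogonal_span_singleton hw.2) (T.restrict hK)
    have hu : (‖w‖⁻¹ : ℂ) • w ∈ Kᗮ := Submodule.le_orthogonal_orthogonal _
      (Submodule.smul_mem _ _ (Submodule.mem_span_singleton_self w))
    obtain ⟨x, hx⟩ := OrthonormalBasis.exists_coe_eq_snoc hn f (norm_smul_inv_norm hw.2) hu
    refine ⟨x, fun i j hji => ?_⟩
    rw [hx]
    induction j using Fin.lastCases with
    | last => exact absurd hji (not_lt.2 (Fin.le_last i))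
    | cast j =>
      induction i using Fin.lastCases with
      | last =>
        rw [Fin.snoc_last, Fin.snoc_castSucc]
        exact Submodule.inner_left_of_mem_orthogonal (hK _ (f j).2) hu
      | cast i =>
        rw [Fin.snoc_castSucc, Fin.snoc_castSucc]
        exact hf i j (Fin.castSucc_lt_castSucc_iff.1 hji)

theorem norm_toEuclideanLin_eigenvectorBasis_eq_singVal {n : ℕ}
    (A : Matrix (Fin n) (Fin n) ℂ) (j : Fin n) :
    ‖toEuclideanLin A ((isHermitian_conjTranspose_mul_self A).eigenvectorBasis j)‖ =
      singVal A j := by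
  have h := A.inner_toEuclideanLin_eigenvectorBasis j j
  rw [if_pos rfl, inner_self_eq_norm_sq_to_K] at h
  rw [singVal, ← Real.sqrt_sq (norm_nonneg _)]
  exact congrArg Real.sqrt (by exact_mod_cast h)

theorem stmt8 {n : ℕ} (A : Matrix (Fin n) (Fin n) ℂ) (p : ℝ) (hp : 1 ≤ p) :
    ((A.charpoly.roots.map fun z => ‖z‖ ^ p).sum) ≤ traceAbsPow A p := by
  set T := toEuclideanLin A
  set v := (isHermitian_conjTranspose_mul_self A).eigenvectorBasis
  obtain ⟨x, hx⟩ := T.exists_orthonormalBasis_inner_apply_eq_zero_of_lt finrank_euclideanSpace_fin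
  have hroots : A.charpoly.roots = univ.val.map fun i => ⟪x i, T (x i)⟫_ℂ := by
    rw [← charpoly_toEuclideanLin, T.roots_charpoly_of_inner_apply_eq_zero_of_lt x hx]
  have horth : Pairwise fun j k => ⟪T (v j), T (v k)⟫_ℂ = 0 := fun j k hjk =>
    (A.inner_toEuclideanLin_eigenvectorBasis j k).trans (if_neg hjk)
  rw [hroots, Multiset.map_map, traceAbsPow]
  simp_rw [← norm_toEuclideanLin_eigenvectorBasis_eq_singVal]
  exact v.sum_norm_inner_apply_self_rpow_le T x horth hp
end

section
/- Two bounded linear operators A, B on a complex Hilbert space are norm-parallel (i.e., there exists a unimodular scalar λ with ‖A + λB‖ = ‖A‖ + ‖B‖) if and only if w(A*B) = ‖A‖·‖B‖, where w is the numerical radius. -/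
/-!
For a unit vector `x` and `|μ| = 1`,
`‖(A + μB)x‖² = ‖Ax‖² + ‖Bx‖² + 2 Re (μ ⟪Ax, Bx⟫)`, and `⟪Ax, Bx⟫` is, up to conjugation,
`⟪A*Bx, x⟫`. Bounding the right-hand side by `‖A‖² + ‖B‖² + 2 w(A*B)` shows that
`‖A + λB‖ = ‖A‖ + ‖B‖` forces `‖A‖‖B‖ ≤ w(A*B)`; the reverse inequality is Cauchy–Schwarz.
Conversely, let `λ` maximise `‖A + μB‖` over the unit circle. Choosing `μ` to rotate `⟪Ax, Bx⟫`
onto the positive axis gives `‖Ax‖² + ‖Bx‖² + 2|⟪Ax, Bx⟫| ≤ ‖A + λB‖²` for every unit `x`. Since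
`|⟪Ax, Bx⟫| ≤ ‖Ax‖‖Bx‖`, the left side falls short of `(‖A‖ + ‖B‖)²` by at most a constant
times `‖A‖‖B‖ - |⟪Ax, Bx⟫|`, and the infimum of that over unit `x` is `‖A‖‖B‖ - w(A*B) = 0`.
-/

open ContinuousLinearMap

/-- The numerical radius $w(T)=\sup\{|\langle Tx,x\rangle| : \|x\|=1\}$. -/
noncomputable def numRadius {H : Type*} [NormedAddCommGroup H] [InnerProductSpace ℂ H]
    (T : H →L[ℂ] H) : ℝ :=
  ⨆ x : {x : H // ‖x‖ = 1}, ‖(inner ℂ (T x.1) x.1 : ℂ)‖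

theorem add_sq_sub_le_of_le_mul {a b c t s : ℝ} (ha : 0 < a) (hb : 0 < b) (hc0 : 0 ≤ c)
    (hc : c ≤ t * s) (ht0 : 0 ≤ t) (hs0 : 0 ≤ s) (ht : t ≤ a) (hs : s ≤ b) :
    a * b * ((a + b) ^ 2 - (t ^ 2 + s ^ 2 + 2 * c)) ≤ 2 * (a + b) ^ 2 * (a * b - c) := by
  have htb : c ^ 2 ≤ (t * b) ^ 2 := pow_le_pow_left₀ hc0 (hc.trans (by gcongr)) 2
  have hsa : c ^ 2 ≤ (s * a) ^ 2 :=
    pow_le_pow_left₀ hc0 (hc.trans (by rw [mul_comm s]; gcongr)) 2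
  have hcab : 0 ≤ a * b - c := sub_nonneg.2 (hc.trans (by gcongr))
  refine le_of_mul_le_mul_left ?_ (mul_pos ha hb)
  nlinarith [mul_le_mul_of_nonneg_left htb (sq_nonneg a),
    mul_le_mul_of_nonneg_left hsa (sq_nonneg b),
    mul_nonneg hcab (add_nonneg (mul_nonneg (add_nonneg (sq_nonneg a) (sq_nonneg b)) hcab)
      (sq_nonneg (a * b)))]

section InnerProductSpace

variable {𝕜 E F : Type*} [RCLike 𝕜] [NormedAddCommGroup E] [InnerProductSpace 𝕜 E]
  [NormedAddCommGroup F] [InnerProductSpace 𝕜 F]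

theorem norm_add_smul_sq_of_norm_eq_one {μ : 𝕜} (hμ : ‖μ‖ = 1) (u v : F) :
    ‖u + μ • v‖ ^ 2 = ‖u‖ ^ 2 + ‖v‖ ^ 2 + 2 * RCLike.re (μ * inner 𝕜 u v) := by
  rw [norm_add_sq (𝕜 := 𝕜), inner_smul_right, norm_smul, hμ, one_mul]
  ring

theorem sq_opNorm_le_of_unit_norm {T : E →L[𝕜] F} {C : ℝ} (hC : 0 ≤ C)
    (h : ∀ x, ‖x‖ = 1 → ‖T x‖ ^ 2 ≤ C) : ‖T‖ ^ 2 ≤ C := by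
  have hT : ‖T‖ ≤ √C := opNorm_le_of_unit_norm (Real.sqrt_nonneg C) fun x hx =>
    (Real.le_sqrt (norm_nonneg _) hC).2 (h x hx)
  exact (Real.le_sqrt (norm_nonneg T) hC).1 hT

theorem sq_norm_add_smul_apply_le {μ : 𝕜} (hμ : ‖μ‖ = 1) (A B : E →L[𝕜] F) {x : E}
    (hx : ‖x‖ = 1) :
    ‖(A + μ • B) x‖ ^ 2 ≤ ‖A‖ ^ 2 + ‖B‖ ^ 2 + 2 * ‖inner 𝕜 (A x) (B x)‖ := by
  rw [add_apply, smul_apply, norm_add_smul_sq_of_norm_eq_one hμ]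
  have hre : RCLike.re (μ * inner 𝕜 (A x) (B x)) ≤ ‖inner 𝕜 (A x) (B x)‖ := by
    simpa [hμ] using RCLike.re_le_norm (μ * inner 𝕜 (A x) (B x))
  gcongr
  · exact A.unit_le_opNorm x hx.le
  · exact B.unit_le_opNorm x hx.le

theorem sq_norm_apply_add_norm_inner_le {A B : E →L[𝕜] F} {M : ℝ}
    (hM : ∀ μ : 𝕜, ‖μ‖ = 1 → ‖A + μ • B‖ ≤ M) {x : E} (hx : ‖x‖ = 1) :
    ‖A x‖ ^ 2 + ‖B x‖ ^ 2 + 2 * ‖inner 𝕜 (A x) (B x)‖ ≤ M ^ 2 := by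
  obtain ⟨μ, hμ, hμc⟩ := RCLike.exists_norm_eq_mul_self (inner 𝕜 (A x) (B x))
  calc ‖A x‖ ^ 2 + ‖B x‖ ^ 2 + 2 * ‖inner 𝕜 (A x) (B x)‖
      = ‖(A + μ • B) x‖ ^ 2 := by
        rw [add_apply, smul_apply, norm_add_smul_sq_of_norm_eq_one hμ, ← hμc,
          RCLike.ofReal_re]
    _ ≤ M ^ 2 := by
        gcongr
        exact (A + μ • B).unit_le_opNorm x hx.le |>.trans (hM μ hμ)

end InnerProductSpace

section NumRadius

variable {H : Type*} [NormedAddCommGroup H] [InnerProductSpace ℂ H]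

theorem numRadius_nonneg (T : H →L[ℂ] H) : 0 ≤ numRadius T :=
  Real.iSup_nonneg fun _ => norm_nonneg _

theorem norm_inner_apply_self_le_opNorm (T : H →L[ℂ] H) {x : H} (hx : ‖x‖ = 1) :
    ‖inner ℂ (T x) x‖ ≤ ‖T‖ :=
  (norm_inner_le_norm _ _).trans (by simpa [hx] using T.unit_le_opNorm x hx.le)

theorem numRadius_le_opNorm (T : H →L[ℂ] H) : numRadius T ≤ ‖T‖ :=
  Real.iSup_le (fun x => norm_inner_apply_self_le_opNorm T x.2) (norm_nonneg T)

theorem norm_inner_apply_self_le_numRadius (T : H →L[ℂ] H) {x : H} (hx : ‖x‖ = 1) :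
    ‖inner ℂ (T x) x‖ ≤ numRadius T :=
  le_ciSup (f := fun x : {x : H // ‖x‖ = 1} => ‖inner ℂ (T x.1) x.1‖)
    ⟨‖T‖, by rintro _ ⟨y, rfl⟩; exact norm_inner_apply_self_le_opNorm T y.2⟩ ⟨x, hx⟩

theorem numRadius_le_of_forall [Nontrivial H] {T : H →L[ℂ] H} {C : ℝ}
    (h : ∀ x, ‖x‖ = 1 → ‖inner ℂ (T x) x‖ ≤ C) : numRadius T ≤ C := by
  obtain ⟨x, hx⟩ := exists_ne (0 : H)
  have : Nonempty {x : H // ‖x‖ = 1} := ⟨⟨(‖x‖⁻¹ : ℂ) • x, norm_smul_inv_norm hx⟩⟩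
  exact ciSup_le fun x => h x.1 x.2

variable [CompleteSpace H]

theorem inner_adjoint_mul_apply_self (A B : H →L[ℂ] H) (x : H) :
    inner ℂ ((adjoint A * B) x) x = inner ℂ (B x) (A x) :=
  adjoint_inner_left A x (B x)

theorem norm_inner_adjoint_mul_apply_self (A B : H →L[ℂ] H) (x : H) :
    ‖inner ℂ ((adjoint A * B) x) x‖ = ‖inner ℂ (A x) (B x)‖ := by
  rw [inner_adjoint_mul_apply_self, norm_inner_symm]

theorem numRadius_adjoint_mul_le (A B : H →L[ℂ] H) : numRadius (adjoint A * B) ≤ ‖A‖ * ‖B‖ :=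
  (numRadius_le_opNorm _).trans <| (norm_mul_le _ _).trans_eq <| by
    rw [LinearIsometryEquiv.norm_map]

theorem mul_norm_le_numRadius_of_norm_add_smul_eq {A B : H →L[ℂ] H} {lam : ℂ} (hlam : ‖lam‖ = 1)
    (h : ‖A + lam • B‖ = ‖A‖ + ‖B‖) : ‖A‖ * ‖B‖ ≤ numRadius (adjoint A * B) := by
  have hsq : ‖A + lam • B‖ ^ 2 ≤ ‖A‖ ^ 2 + ‖B‖ ^ 2 + 2 * numRadius (adjoint A * B) := by
    refine sq_opNorm_le_of_unit_norm (by positivity [numRadius_nonneg (adjoint A * B)])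
      fun x hx => (sq_norm_add_smul_apply_le hlam A B hx).trans ?_
    rw [← norm_inner_adjoint_mul_apply_self]
    gcongr
    exact norm_inner_apply_self_le_numRadius _ hx
  rw [h] at hsq
  nlinarith

theorem mul_add_sq_sub_sq_le_of_forall_norm_add_smul_le [Nontrivial H] {A B : H →L[ℂ] H}
    (hA : A ≠ 0) (hB : B ≠ 0) {M : ℝ} (hM : ∀ μ : ℂ, ‖μ‖ = 1 → ‖A + μ • B‖ ≤ M) :
    ‖A‖ * ‖B‖ * ((‖A‖ + ‖B‖) ^ 2 - M ^ 2) ≤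
      2 * (‖A‖ + ‖B‖) ^ 2 * (‖A‖ * ‖B‖ - numRadius (adjoint A * B)) := by
  have ha : 0 < ‖A‖ := norm_pos_iff.2 hA
  have hb : 0 < ‖B‖ := norm_pos_iff.2 hB
  suffices numRadius (adjoint A * B) ≤ ‖A‖ * ‖B‖ -
      ‖A‖ * ‖B‖ * ((‖A‖ + ‖B‖) ^ 2 - M ^ 2) / (2 * (‖A‖ + ‖B‖) ^ 2) by
    rw [le_sub_comm, div_le_iff₀ (by positivity)] at this
    linarith
  refine numRadius_le_of_forall fun x hx => ?_
  rw [norm_inner_adjoint_mul_apply_self, le_sub_comm, div_le_iff₀ (by positivity)]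
  have := add_sq_sub_le_of_le_mul ha hb (norm_nonneg _) (norm_inner_le_norm (𝕜 := ℂ) (A x) (B x))
    (norm_nonneg _) (norm_nonneg _) (A.unit_le_opNorm x hx.le) (B.unit_le_opNorm x hx.le)
  linarith [mul_le_mul_of_nonneg_left (sq_norm_apply_add_norm_inner_le hM hx) (mul_pos ha hb).le]

theorem exists_norm_add_smul_eq_of_numRadius_eq {A B : H →L[ℂ] H}
    (h : numRadius (adjoint A * B) = ‖A‖ * ‖B‖) :
    ∃ lam : ℂ, ‖lam‖ = 1 ∧ ‖A + lam • B‖ = ‖A‖ + ‖B‖ := by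
  rcases eq_or_ne A 0 with rfl | hA
  · exact ⟨1, norm_one, by simp⟩
  rcases eq_or_ne B 0 with rfl | hB
  · exact ⟨1, norm_one, by simp⟩
  have : Nontrivial H := by
    obtain ⟨x, hx⟩ := DFunLike.ne_iff.1 hA
    exact nontrivial_of_ne x 0 fun h0 => hx (by simp [h0])
  obtain ⟨lam, hlam, hmax⟩ := (isCompact_sphere (0 : ℂ) 1).exists_isMaxOn
    (NormedSpace.sphere_nonempty.2 zero_le_one)
    (by fun_prop : Continuous fun μ : ℂ => ‖A + μ • B‖).continuousOn
  rw [mem_sphere_zero_iff_norm] at hlam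
  have hdeficit := mul_add_sq_sub_sq_le_of_forall_norm_add_smul_le hA hB
    fun μ hμ => hmax (mem_sphere_zero_iff_norm.2 hμ)
  rw [h, sub_self, mul_zero] at hdeficit
  have hsq : (‖A‖ + ‖B‖) ^ 2 ≤ ‖A + lam • B‖ ^ 2 := by
    nlinarith [mul_pos (norm_pos_iff.2 hA) (norm_pos_iff.2 hB)]
  refine ⟨lam, hlam, le_antisymm ?_ ?_⟩
  · exact (norm_add_le _ _).trans_eq (by rw [norm_smul, hlam, one_mul])
  · exact (pow_le_pow_iff_left₀ (by positivity) (norm_nonneg _) two_ne_zero).1 hsq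

end NumRadius

theorem stmt15 {H : Type*} [NormedAddCommGroup H] [InnerProductSpace ℂ H] [CompleteSpace H]
    (A B : H →L[ℂ] H) :
    (∃ lam : ℂ, ‖lam‖ = 1 ∧ ‖A + lam • B‖ = ‖A‖ + ‖B‖) ↔
      numRadius (adjoint A * B) = ‖A‖ * ‖B‖ :=
  ⟨fun ⟨_, hlam, h⟩ => le_antisymm (numRadius_adjoint_mul_le A B)
    (mul_norm_le_numRadius_of_norm_add_smul_eq hlam h),
   exists_norm_add_smul_eq_of_numRadius_eq⟩
end
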